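/- arXiv:2505.01410 — 3 statements merged into one kernel-verified Lean document; each statement's English description precedes it below -/
import Mathlib

section
/- Let G be a finite simple graph with a linear order ≺ on V(G) and a real number k > 0. Suppose that for every vertex v, the number of neighbors w of v with v ≺ w is at most k. Call an edge e = {u,v} with u ≺ v 'typical' if the number of neighbors w of v satisfying (u ≺ w or w = u) is at most k. Then in the subgraph of G consisting of all typical edges, every vertex has degree at most k. -/
theorem stmt9 {V : Type*} [Fintype V] [LinearOrder V] (G : SimpleGraph V) (k : ℝ) (hk : 0 < k)
    (hup : ∀ v : V, ({w : V | G.Adj v w ∧ v < w}.ncard : ℝ) ≤ k)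
    (T : SimpleGraph V)
    (hT : T = SimpleGraph.fromEdgeSet
      {e : Sym2 V | ∃ u v, e = s(u,v) ∧ G.Adj u v ∧ u < v ∧
        ({w : V | G.Adj v w ∧ (u < w ∨ w = u)}.ncard : ℝ) ≤ k}) :
    ∀ x : V, ({y : V | T.Adj x y}.ncard : ℝ) ≤ k := by
  classical
  intro x
  -- Structure of T-adjacency
  have hadj : ∀ y : V, T.Adj x y → G.Adj x y ∧
      ((x < y ∧ ({w : V | G.Adj y w ∧ (x < w ∨ w = x)}.ncard : ℝ) ≤ k) ∨
       (y < x ∧ ({w : V | G.Adj x w ∧ (y < w ∨ w = y)}.ncard : ℝ) ≤ k)) := by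
    intro y hy
    subst hT
    rw [SimpleGraph.fromEdgeSet_adj] at hy
    obtain ⟨⟨u, v, heq, hGuv, huv, hP⟩, hne⟩ := hy
    rw [Sym2.eq_iff] at heq
    rcases heq with ⟨hx, hyv⟩ | ⟨hx, hyu⟩
    · subst hx; subst hyv
      exact ⟨hGuv, Or.inl ⟨huv, hP⟩⟩
    · subst hx; subst hyu
      exact ⟨hGuv.symm, Or.inr ⟨huv, hP⟩⟩
  by_cases hD : ∃ y, T.Adj x y ∧ y < x
  · -- take the minimal down-neighbor
    set D : Finset V := Finset.univ.filter (fun y => T.Adj x y ∧ y < x) with hDdef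
    have hDne : D.Nonempty := by
      obtain ⟨y, hy⟩ := hD
      exact ⟨y, by simp [hDdef, hy.1, hy.2]⟩
    set y₀ := D.min' hDne with hy₀def
    have hy₀mem : T.Adj x y₀ ∧ y₀ < x := by
      have := D.min'_mem hDne
      simpa [hDdef] using this
    obtain ⟨hGxy₀, hcase⟩ := hadj y₀ hy₀mem.1
    have hP : ({w : V | G.Adj x w ∧ (y₀ < w ∨ w = y₀)}.ncard : ℝ) ≤ k := by
      rcases hcase with ⟨h1, _⟩ | ⟨_, h2⟩
      · exact absurd h1 (not_lt.mpr hy₀mem.2.le)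
      · exact h2
    have hsub : {y : V | T.Adj x y} ⊆ {w : V | G.Adj x w ∧ (y₀ < w ∨ w = y₀)} := by
      intro y hy
      have hG := (hadj y hy).1
      rcases lt_trichotomy x y with h | h | h
      · exact ⟨hG, Or.inl (hy₀mem.2.trans h)⟩
      · exact absurd h (G.ne_of_adj hG)
      · have hyD : y ∈ D := by simpa [hDdef, h] using hy
        have := D.min'_le y hyD
        rcases lt_or_eq_of_le this with h' | h'
        · exact ⟨hG, Or.inl h'⟩
        · exact ⟨hG, Or.inr h'.symm⟩
    have hle := Set.ncard_le_ncard hsub (Set.toFinite _)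
    exact le_trans (by exact_mod_cast hle) hP
  · push_neg at hD
    have hsub : {y : V | T.Adj x y} ⊆ {w : V | G.Adj x w ∧ x < w} := by
      intro y hy
      have hG := (hadj y hy).1
      rcases lt_trichotomy x y with h | h | h
      · exact ⟨hG, h⟩
      · exact absurd h (G.ne_of_adj hG)
      · exact absurd h (not_lt.mpr (hD y hy))
    have hle := Set.ncard_le_ncard hsub (Set.toFinite _)
    exact le_trans (by exact_mod_cast hle) (hup x)
end

section
/- Let G be a finite simple graph with a linear order ≺ on V(G), let k > 0 be a real number, and let C ⊆ V(G) be a set of vertices such that every u ∈ C satisfies: (i) the number of neighbors w of u with ¬(w ≺ u) is at most k, and (ii) for every neighbor w of u with u ≺ w, the number of neighbors x of w satisfying (u ≺ x or x = u) is at most k. Then the subgraph of G consisting of all edges whose ≺-smaller endpoint lies in C has maximum degree at most k. -/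
theorem stmt10 {V : Type*} [Fintype V] [LinearOrder V] (G : SimpleGraph V) (k : ℝ) (hk : 0 < k)
    (C : Set V)
    (h1 : ∀ u ∈ C, ({w : V | G.Adj u w ∧ ¬ w < u}.ncard : ℝ) ≤ k)
    (h2 : ∀ u ∈ C, ∀ w, G.Adj u w → u < w →
      ({x : V | G.Adj w x ∧ (u < x ∨ x = u)}.ncard : ℝ) ≤ k)
    (T : SimpleGraph V)
    (hT : T = SimpleGraph.fromEdgeSet
      {e : Sym2 V | ∃ u v, e = s(u,v) ∧ G.Adj u v ∧ u < v ∧ u ∈ C}) :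
    ∀ x : V, ({y : V | T.Adj x y}.ncard : ℝ) ≤ k := by
  classical
  have hadj : ∀ a b : V, T.Adj a b ↔
      ((G.Adj a b ∧ a < b ∧ a ∈ C) ∨ (G.Adj b a ∧ b < a ∧ b ∈ C)) := by
    intro a b
    subst hT
    rw [SimpleGraph.fromEdgeSet_adj]
    constructor
    · rintro ⟨⟨u, v, huv, hGuv, hlt, huC⟩, hne⟩
      rw [Sym2.eq_iff] at huv
      rcases huv with ⟨rfl, rfl⟩ | ⟨rfl, rfl⟩
      · exact Or.inl ⟨hGuv, hlt, huC⟩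
      · exact Or.inr ⟨hGuv, hlt, huC⟩
    · rintro (⟨hGab, hlt, hC⟩ | ⟨hGba, hlt, hC⟩)
      · exact ⟨⟨a, b, rfl, hGab, hlt, hC⟩, hlt.ne⟩
      · exact ⟨⟨b, a, Sym2.eq_swap.symm, hGba, hlt, hC⟩, hlt.ne'⟩
  intro x
  by_cases hne : ∃ y, T.Adj x y ∧ y < x
  · have hsne : (Finset.univ.filter (fun y => T.Adj x y ∧ y < x)).Nonempty := by
      obtain ⟨y, hy⟩ := hne
      exact ⟨y, by simpa using hy⟩
    set y0 := (Finset.univ.filter (fun y => T.Adj x y ∧ y < x)).min' hsne with hy0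
    have hy0mem : T.Adj x y0 ∧ y0 < x := by
      have := (Finset.univ.filter (fun y => T.Adj x y ∧ y < x)).min'_mem hsne
      simpa using this
    have hy0C : y0 ∈ C ∧ G.Adj y0 x := by
      rcases (hadj x y0).1 hy0mem.1 with ⟨_, hlt, _⟩ | ⟨hG, _, hC⟩
      · exact absurd hlt (asymm hy0mem.2)
      · exact ⟨hC, hG⟩
    have hsub : {y | T.Adj x y} ⊆ {z | G.Adj x z ∧ (y0 < z ∨ z = y0)} := by
      intro z hz
      have hGz : G.Adj x z := by
        rcases (hadj x z).1 hz with ⟨hG, _, _⟩ | ⟨hG, _, _⟩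
        · exact hG
        · exact hG.symm
      refine ⟨hGz, ?_⟩
      by_cases hzx : z < x
      · have : y0 ≤ z := Finset.min'_le _ _ (by simpa using And.intro hz hzx)
        rcases lt_or_eq_of_le this with h | h
        · exact Or.inl h
        · exact Or.inr h.symm
      · have : x < z := lt_of_le_of_ne (le_of_not_gt hzx) (fun h => (T.irrefl (h ▸ hz)))
        exact Or.inl (hy0mem.2.trans this)
    have hcard : ({y | T.Adj x y}.ncard : ℝ) ≤
        ({z | G.Adj x z ∧ (y0 < z ∨ z = y0)}.ncard : ℝ) := by
      exact_mod_cast Set.ncard_le_ncard hsub (Set.toFinite _)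
    exact hcard.trans (h2 y0 hy0C.1 x hy0C.2 hy0mem.2)
  · push_neg at hne
    by_cases hnon : {y | T.Adj x y}.Nonempty
    · obtain ⟨y, hy⟩ := hnon
      have hxC : x ∈ C := by
        rcases (hadj x y).1 hy with ⟨_, _, hC⟩ | ⟨_, hlt, _⟩
        · exact hC
        · exact absurd hlt (not_lt.2 (hne y hy))
      have hsub : {y | T.Adj x y} ⊆ {w | G.Adj x w ∧ ¬ w < x} := by
        intro z hz
        rcases (hadj x z).1 hz with ⟨hG, hlt, _⟩ | ⟨_, hlt, _⟩
        · exact ⟨hG, asymm hlt⟩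
        · exact absurd hlt (not_lt.2 (hne z hz))
      have hcard : ({y | T.Adj x y}.ncard : ℝ) ≤
          ({w | G.Adj x w ∧ ¬ w < x}.ncard : ℝ) := by
        exact_mod_cast Set.ncard_le_ncard hsub (Set.toFinite _)
      exact hcard.trans (h1 x hxC)
    · rw [Set.not_nonempty_iff_eq_empty] at hnon
      simp [hnon, hk.le]
end

section
/- Let G be a finite simple graph, ≺ a linear order on V(G), and ℓ : V(G) → {1, …, L} a 'layer' function such that: (a) u ≺ v implies ℓ(u) ≤ ℓ(v); (b) every vertex has at most one strictly ≺-greater neighbor; and (c) whenever u and v are adjacent with ℓ(u) = ℓ(v), the ≺-greater of the two has no strictly ≺-greater neighbor. Then every vertex lies within graph distance L + 1 of the ≺-maximum vertex of its connected component; in particular, every connected component of G has diameter at most 2L + 2. -/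
open Classical in
noncomputable def fmaxAux {V : Type*} [Fintype V] [LinearOrder V] (G : SimpleGraph V) : V → V :=
  WellFounded.fix (wellFounded_gt (α := V)) fun v ih =>
    if h : ∃ w, G.Adj v w ∧ v < w then ih h.choose h.choose_spec.2 else v

open Classical in
lemma fmaxAux_eq {V : Type*} [Fintype V] [LinearOrder V] (G : SimpleGraph V) (v : V) :
    fmaxAux G v = if h : ∃ w, G.Adj v w ∧ v < w then fmaxAux G h.choose else v := by
  rw [fmaxAux, WellFounded.fix_eq]

lemma fmaxAux_of_not {V : Type*} [Fintype V] [LinearOrder V] (G : SimpleGraph V) (v : V)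
    (h : ¬ ∃ w, G.Adj v w ∧ v < w) : fmaxAux G v = v := by
  rw [fmaxAux_eq, dif_neg h]

open Classical in
lemma fmaxAux_of_adj {V : Type*} [Fintype V] [LinearOrder V] (G : SimpleGraph V)
    (hb : ∀ v : V, {w : V | G.Adj v w ∧ v < w}.Subsingleton)
    {v w : V} (hadj : G.Adj v w) (hlt : v < w) : fmaxAux G v = fmaxAux G w := by
  have h : ∃ w, G.Adj v w ∧ v < w := ⟨w, hadj, hlt⟩
  have : h.choose = w := hb v h.choose_spec ⟨hadj, hlt⟩
  rw [fmaxAux_eq, dif_pos h, this]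

lemma fmaxAux_reachable {V : Type*} [Fintype V] [LinearOrder V] (G : SimpleGraph V) (v : V) :
    G.Reachable v (fmaxAux G v) := by
  induction v using (wellFounded_gt (α := V)).induction with
  | _ v ih =>
    rw [fmaxAux_eq]
    split
    · rename_i h
      exact (SimpleGraph.Adj.reachable h.choose_spec.1).trans (ih _ h.choose_spec.2)
    · rfl

lemma le_fmaxAux {V : Type*} [Fintype V] [LinearOrder V] (G : SimpleGraph V) (v : V) :
    v ≤ fmaxAux G v := by
  induction v using (wellFounded_gt (α := V)).induction with
  | _ v ih =>
    rw [fmaxAux_eq]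
    split
    · rename_i h
      exact le_of_lt (lt_of_lt_of_le h.choose_spec.2 (ih _ h.choose_spec.2))
    · rfl

lemma fmaxAux_no_greater {V : Type*} [Fintype V] [LinearOrder V] (G : SimpleGraph V) (v : V) :
    ¬ ∃ w, G.Adj (fmaxAux G v) w ∧ fmaxAux G v < w := by
  induction v using (wellFounded_gt (α := V)).induction with
  | _ v ih =>
    rw [fmaxAux_eq]
    split
    · rename_i h
      exact ih _ h.choose_spec.2
    · rename_i h
      exact h

lemma fmaxAux_const {V : Type*} [Fintype V] [LinearOrder V] (G : SimpleGraph V)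
    (hb : ∀ v : V, {w : V | G.Adj v w ∧ v < w}.Subsingleton)
    {u v : V} (h : G.Reachable u v) : fmaxAux G u = fmaxAux G v := by
  obtain ⟨p⟩ := h
  induction p with
  | nil => rfl
  | cons hadj p ih =>
    rename_i a b c
    rcases lt_trichotomy a b with h1 | h1 | h1
    · rw [fmaxAux_of_adj G hb hadj h1, ih]
    · rw [h1, ih]
    · rw [← fmaxAux_of_adj G hb hadj.symm h1, ih]

theorem stmt11 {V : Type*} [Fintype V] [LinearOrder V] (G : SimpleGraph V)
    (L : ℕ) (layer : V → ℕ) (hlayer : ∀ v, 1 ≤ layer v ∧ layer v ≤ L)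
    (ha : ∀ u v : V, u < v → layer u ≤ layer v)
    (hb : ∀ v : V, {w : V | G.Adj v w ∧ v < w}.Subsingleton)
    (hc : ∀ u v : V, G.Adj u v → layer u = layer v → u < v →
      ∀ w, G.Adj v w → ¬ v < w) :
    (∀ v : V, ∃ m : V, G.Reachable v m ∧ (∀ w, G.Reachable v w → w ≤ m) ∧
      G.dist v m ≤ L + 1) ∧
    (∀ u v : V, G.Reachable u v → G.dist u v ≤ 2 * L + 2) := by
  classical
  -- key distance bound
  have hdist : ∀ v : V, G.dist v (fmaxAux G v) + layer v ≤ L + 1 := by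
    intro v
    induction v using (wellFounded_gt (α := V)).induction with
    | _ v ih =>
      by_cases h : ∃ w, G.Adj v w ∧ v < w
      · obtain ⟨g, hadj, hlt⟩ := h
        have hfe : fmaxAux G v = fmaxAux G g := fmaxAux_of_adj G hb hadj hlt
        rcases eq_or_lt_of_le (ha v g hlt) with hl | hl
        · -- flat step: g has no greater neighbor, so fmaxAux G g = g
          have hg : fmaxAux G g = g := fmaxAux_of_not G g (by
            rintro ⟨w, hw, hw2⟩
            exact hc v g hadj hl hlt w hw hw2)
          rw [hfe, hg]
          have : G.dist v g ≤ 1 := by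
            simpa using SimpleGraph.dist_le hadj.toWalk
          have := (hlayer v).2
          omega
        · -- strictly increasing step
          have hg := ih g hlt
          have htri : G.dist v (fmaxAux G g) ≤ 1 + G.dist g (fmaxAux G g) := by
            obtain ⟨p, hp⟩ := (fmaxAux_reachable G g).exists_walk_length_eq_dist
            have := SimpleGraph.dist_le (SimpleGraph.Walk.cons hadj p)
            simpa [hp, Nat.add_comm] using this
          rw [hfe]
          omega
      · rw [fmaxAux_of_not G v h]
        simp only [SimpleGraph.dist_self, Nat.zero_add]
        exact Nat.le_succ_of_le (hlayer v).2
  have hkey : ∀ v : V, G.Reachable v (fmaxAux G v) ∧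
      (∀ w, G.Reachable v w → w ≤ fmaxAux G v) ∧ G.dist v (fmaxAux G v) ≤ L + 1 := by
    intro v
    refine ⟨fmaxAux_reachable G v, fun w hw => ?_, ?_⟩
    · rw [fmaxAux_const G hb hw]
      exact le_fmaxAux G w
    · have := hdist v
      have := (hlayer v).1
      omega
  constructor
  · exact fun v => ⟨fmaxAux G v, hkey v⟩
  · intro u v huv
    have h1 := (hkey u).2.2
    have h2 := (hkey v).2.2
    have hfe : fmaxAux G u = fmaxAux G v := fmaxAux_const G hb huv
    obtain ⟨p, hp⟩ := (hkey u).1.exists_walk_length_eq_dist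
    have hr2 : G.Reachable v (fmaxAux G u) := hfe ▸ (hkey v).1
    obtain ⟨q, hq⟩ := hr2.exists_walk_length_eq_dist
    have hd2 : G.dist v (fmaxAux G u) ≤ L + 1 := by rw [hfe]; exact h2
    have := SimpleGraph.dist_le (p.append q.reverse)
    rw [SimpleGraph.Walk.length_append, SimpleGraph.Walk.length_reverse] at this
    omega
end
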